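/- arXiv:0706.1138 — 5 statements merged into one kernel-verified Lean document; each statement's English description precedes it below -/
import Mathlib

section
/- Let C ⊆ T be integral domains such that: (1) C is a Krull domain and T is a unique factorization domain; (2) the induced morphism Spec(T) → Spec(C) is an open immersion; (3) the closed subset Spec(C) \ Spec(T) equals V(p) for a single height-one prime ideal p of C, or is empty; (4) T^× = C^×; (5) no prime element of T belongs to p. Then T = C. -/
/-!
As `Spec T → Spec C` is an open immersion, `C_{q ∩ C} = T_q` for every prime `q` of `T`, so
`T ⊆ C_q` for every height-one prime `q ≠ p` of `C`. If `p` is also in the image,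
`T ⊆ ⋂ C_q = C` because `C` is Krull. Otherwise `T ∩ C_p ⊆ C`, and the discrete valuation `v_p`
is `≤ 0` on every nonzero element of `T`: units of `T` are units of `C`, and a prime `t` with
`v_p(t) > 0` would lie in `T ∩ C_p = C`, hence in `p`. This contradicts `v_p(c) > 0` for a
nonzero `c ∈ p ⊆ T`.
-/

/-- A Krull domain: the localization at every height-one prime is a discrete valuation ring,
every nonzero element lies in only finitely many height-one primes, and the domain is the
intersection of its localizations at height-one primes inside its fraction field. -/
def IsKrullDomain (R : Type*) [CommRing R] [IsDomain R] : Prop :=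
  (∀ p : PrimeSpectrum R, Order.height p = 1 →
      IsDiscreteValuationRing (Localization.AtPrime p.asIdeal)) ∧
  (∀ x : R, x ≠ 0 → {p : PrimeSpectrum R | Order.height p = 1 ∧ x ∈ p.asIdeal}.Finite) ∧
  (∀ x : FractionRing R,
      (∀ p : PrimeSpectrum R, Order.height p = 1 →
        ∃ a s : R, s ∉ p.asIdeal ∧
          x * algebraMap R (FractionRing R) s = algebraMap R (FractionRing R) a) →
      x ∈ (algebraMap R (FractionRing R)).range)

universe u

section Fractions

variable {C T : Type*} [CommRing C] [CommRing T] [Algebra C T]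

/-- `x ∈ C_q`, i.e. `x = a / s` with `s ∉ q`. -/
def MemLocalization (q : Ideal C) (x : T) : Prop :=
  ∃ a s : C, s ∉ q ∧ algebraMap C T s * x = algebraMap C T a

/-- `x⁻¹ ∈ C_q`, i.e. `v_q(x) ≤ 0` when `C_q` is a discrete valuation ring. -/
def InvMemLocalization (q : Ideal C) (x : T) : Prop :=
  ∃ a s : C, s ∉ q ∧ algebraMap C T a * x = algebraMap C T s

theorem InvMemLocalization.mul {p : Ideal C} [p.IsPrime] {x y : T}
    (hx : InvMemLocalization p x) (hy : InvMemLocalization p y) :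
    InvMemLocalization p (x * y) := by
  obtain ⟨a, s, hs, hx⟩ := hx
  obtain ⟨b, t, ht, hy⟩ := hy
  refine ⟨a * b, s * t, Ideal.IsPrime.mul_notMem ‹_› hs ht, ?_⟩
  simp only [map_mul, ← hx, ← hy]
  ring

theorem invMemLocalization_algebraMap {p : Ideal C} {c : C} (hc : c ∉ p) :
    InvMemLocalization p (algebraMap C T c) :=
  ⟨1, c, hc, by rw [map_one, one_mul]⟩

theorem not_invMemLocalization_algebraMap (hinj : Function.Injective (algebraMap C T))
    {p : Ideal C} {c : C} (hc : c ∈ p) : ¬ InvMemLocalization p (algebraMap C T c) := by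
  rintro ⟨a, s, hs, h⟩
  rw [← map_mul] at h
  exact hs (hinj h ▸ p.mul_mem_left a hc)

theorem mul_eq_mul_of_algebraMap_mul_eq (hinj : Function.Injective (algebraMap C T)) {x : T}
    {a s b t : C} (hx : algebraMap C T s * x = algebraMap C T a)
    (hx' : algebraMap C T t * x = algebraMap C T b) : a * t = b * s :=
  hinj <| by simp only [map_mul]; linear_combination algebraMap C T s * hx' - algebraMap C T t * hx

theorem mem_range_of_forall_memLocalization [IsDomain C] [IsDomain T]
    (hinj : Function.Injective (algebraMap C T)) (hC : IsKrullDomain C) {x : T}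
    (h₀ : MemLocalization (⊥ : Ideal C) x)
    (h : ∀ q : PrimeSpectrum C, Order.height q = 1 → MemLocalization q.asIdeal x) :
    x ∈ (algebraMap C T).range := by
  obtain ⟨a₀, s₀, hs₀, hx₀⟩ := h₀
  rw [Ideal.mem_bot] at hs₀
  have hs₀K : algebraMap C (FractionRing C) s₀ ≠ 0 :=
    (map_ne_zero_iff _ (IsFractionRing.injective C _)).2 hs₀
  obtain ⟨c, hc⟩ := hC.2.2 (algebraMap C _ a₀ / algebraMap C _ s₀) fun q hq => by
    obtain ⟨a, s, hs, hx⟩ := h q hq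
    refine ⟨a, s, hs, ?_⟩
    rw [div_mul_eq_mul_div, div_eq_iff hs₀K, ← map_mul, ← map_mul,
      mul_eq_mul_of_algebraMap_mul_eq hinj hx₀ hx]
  rw [eq_div_iff hs₀K, ← map_mul, (IsFractionRing.injective C _).eq_iff] at hc
  refine ⟨c, mul_left_cancel₀ ((map_ne_zero_iff _ hinj).2 hs₀) ?_⟩
  rw [hx₀, ← hc, map_mul, mul_comm]

theorem exists_mul_eq_or_mul_eq_of_valuationRing [IsDomain C] (p : Ideal C) [p.IsPrime]
    [ValuationRing (Localization.AtPrime p)] (a₀ s₀ : C) :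
    ∃ a s : C, s ∉ p ∧ (s₀ * a = a₀ * s ∨ a₀ * a = s₀ * s) := by
  obtain ⟨d, hd⟩ := ValuationRing.cond (algebraMap C (Localization.AtPrime p) s₀)
    (algebraMap C (Localization.AtPrime p) a₀)
  obtain ⟨⟨a, s⟩, rfl⟩ := IsLocalization.mk'_surjective p.primeCompl d
  have hinj := IsLocalization.injective (Localization.AtPrime p) p.primeCompl_le_nonZeroDivisors
  refine ⟨a, s, s.2, hd.imp (fun hd => hinj ?_) (fun hd => hinj ?_)⟩ <;>
  · dsimp only at hd
    rwa [IsLocalization.mul_mk'_eq_mk'_of_mul, IsLocalization.mk'_eq_iff_eq_mul, ← map_mul] at hd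

theorem memLocalization_or_invMemLocalization [IsDomain C] [IsDomain T]
    (hinj : Function.Injective (algebraMap C T)) (p : Ideal C) [p.IsPrime]
    [ValuationRing (Localization.AtPrime p)] {x : T} (h₀ : MemLocalization (⊥ : Ideal C) x) :
    MemLocalization p x ∨ InvMemLocalization p x := by
  obtain ⟨a₀, s₀, hs₀, hx₀⟩ := h₀
  have hs₀T : algebraMap C T s₀ ≠ 0 := (map_ne_zero_iff _ hinj).2 (by simpa using hs₀)
  obtain ⟨a, s, hs, h | h⟩ := exists_mul_eq_or_mul_eq_of_valuationRing p a₀ s₀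
  · refine .inl ⟨a, s, hs, mul_left_cancel₀ hs₀T ?_⟩
    rw [← mul_assoc, mul_comm _ (algebraMap C T s), mul_assoc, hx₀, ← map_mul, ← map_mul, h,
      mul_comm]
  · refine .inr ⟨a, s, hs, mul_left_cancel₀ hs₀T ?_⟩
    rw [← mul_assoc, mul_comm _ (algebraMap C T a), mul_assoc, hx₀, ← map_mul, ← map_mul,
      mul_comm a, h]

theorem invMemLocalization_of_ne_zero [IsDomain C] [IsDomain T] [UniqueFactorizationMonoid T]
    (hinj : Function.Injective (algebraMap C T)) (p : Ideal C) [p.IsPrime]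
    [ValuationRing (Localization.AtPrime p)] (hgen : ∀ x : T, MemLocalization (⊥ : Ideal C) x)
    (hdesc : ∀ x : T, MemLocalization p x → x ∈ (algebraMap C T).range)
    (hunit : ∀ t : T, IsUnit t → ∃ c : C, IsUnit c ∧ algebraMap C T c = t)
    (hprime : ∀ t : T, Prime t → t ∉ algebraMap C T '' (p : Set C)) {t : T} (ht : t ≠ 0) :
    InvMemLocalization p t := by
  induction t using UniqueFactorizationMonoid.induction_on_prime with
  | h₁ => exact absurd rfl ht
  | h₂ u hu =>
    obtain ⟨c, hc, rfl⟩ := hunit u hu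
    exact invMemLocalization_algebraMap fun hcp =>
      ‹p.IsPrime›.ne_top (p.eq_top_of_isUnit_mem hcp hc)
  | h₃ a t ha htp ih =>
    refine InvMemLocalization.mul ?_ (ih ha)
    refine (memLocalization_or_invMemLocalization hinj p (hgen t)).elim (fun h => ?_) id
    obtain ⟨c, rfl⟩ := hdesc t h
    exact invMemLocalization_algebraMap fun hcp => hprime _ htp ⟨c, hcp, rfl⟩

end Fractions

open AlgebraicGeometry CategoryTheory

theorem Localization.localRingHom_bijective_of_isOpenImmersion {R S : CommRingCat.{u}}
    (f : R ⟶ S) (hf : IsOpenImmersion (Spec.map f)) (q : PrimeSpectrum S) :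
    Function.Bijective (Localization.localRingHom (q.comap f.hom).asIdeal q.asIdeal f.hom rfl) :=
  (ConcreteCategory.isIso_iff_bijective (CommRingCat.ofHom _)).1 <|
    ((MorphismProperty.isomorphisms _).arrow_mk_iso_iff (Scheme.arrowStalkMapSpecIso f q)).1
      ((IsOpenImmersion.iff_isIso_stalkMap.1 hf).2 q)

theorem memLocalization_of_isOpenImmersion {C T : Type u} [CommRing C] [CommRing T] [IsDomain T]
    [Algebra C T]
    (h : IsOpenImmersion (Spec.map (CommRingCat.ofHom (algebraMap C T))))
    (q : PrimeSpectrum T) (x : T) : MemLocalization (q.comap (algebraMap C T)).asIdeal x := by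
  have hsurj : Function.Surjective (Localization.localRingHom
      (q.asIdeal.comap (algebraMap C T)) q.asIdeal (algebraMap C T) rfl) :=
    (Localization.localRingHom_bijective_of_isOpenImmersion _ h q).2
  obtain ⟨y, hy⟩ := hsurj (algebraMap T (Localization.AtPrime q.asIdeal) x)
  obtain ⟨⟨a, s⟩, rfl⟩ := IsLocalization.mk'_surjective
    (q.asIdeal.comap (algebraMap C T)).primeCompl y
  refine ⟨a, s, s.2, IsLocalization.injective (Localization.AtPrime q.asIdeal)
    q.asIdeal.primeCompl_le_nonZeroDivisors ?_⟩
  dsimp only at hy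
  rw [Localization.localRingHom_mk', IsLocalization.mk'_eq_iff_eq_mul] at hy
  simpa [map_mul, mul_comm] using hy.symm

theorem PrimeSpectrum.asIdeal_ne_bot_of_height_ne_zero {R : Type*} [CommRing R]
    {p : PrimeSpectrum R} (hp : Order.height p ≠ 0) : p.asIdeal ≠ ⊥ := fun h =>
  hp (Order.height_eq_zero.2 fun q _ => show p.asIdeal ≤ q.asIdeal from h ▸ bot_le)

theorem PrimeSpectrum.mem_range_comap_of_height_eq_one {C T : Type*} [CommRing C] [CommRing T]
    {f : C →+* T} {p : Ideal C} {hp : p.IsPrime}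
    (hht : Order.height (⟨p, hp⟩ : PrimeSpectrum C) = 1)
    (h : (Set.range (PrimeSpectrum.comap f))ᶜ = PrimeSpectrum.zeroLocus (p : Set C))
    {q : PrimeSpectrum C} (hq : Order.height q = 1) (hqp : q.asIdeal ≠ p) :
    q ∈ Set.range (PrimeSpectrum.comap f) := by
  by_contra hq'
  have hlt : (⟨p, hp⟩ : PrimeSpectrum C) < q :=
    lt_of_le_of_ne (h ▸ hq' : q ∈ PrimeSpectrum.zeroLocus (p : Set C))
      fun h => hqp (congrArg _ h).symm
  have := Order.height_strictMono hlt (by simp [hht])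
  simp [hht, hq] at this

/-- Let `C ⊆ T` be integral domains such that (1) `C` is a Krull domain and `T` is a UFD;
(2) `Spec T → Spec C` is an open immersion; (3) the closed set `Spec C \ Spec T` is `V(p)`
for a single height-one prime `p` of `C`, or is empty; (4) `T^× = C^×`;
(5) no prime element of `T` belongs to `p`.  Then `T = C`. -/
theorem krull_eq_of_open_immersion_prime
    (C T : Type u) [CommRing C] [IsDomain C] [CommRing T] [IsDomain T] [Algebra C T]
    (hinj : Function.Injective (algebraMap C T))
    -- (1)
    (h1 : IsKrullDomain C) [UniqueFactorizationMonoid T]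
    -- (2)
    (h2 : AlgebraicGeometry.IsOpenImmersion
      (AlgebraicGeometry.Spec.map (CommRingCat.ofHom (algebraMap C T))))
    -- (3)
    (p : Ideal C) (hp : p.IsPrime)
    (hht : Order.height (⟨p, hp⟩ : PrimeSpectrum C) = 1)
    (h3 : (Set.range (PrimeSpectrum.comap (algebraMap C T)))ᶜ =
        PrimeSpectrum.zeroLocus (p : Set C) ∨
      (Set.range (PrimeSpectrum.comap (algebraMap C T)))ᶜ = ∅)
    -- (4)
    (h4 : ∀ t : T, IsUnit t ↔ ∃ c : C, IsUnit c ∧ algebraMap C T c = t)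
    -- (5)
    (h5 : ∀ t : T, Prime t → t ∉ algebraMap C T '' (p : Set C)) :
    Function.Surjective (algebraMap C T) := by
  have hloc := memLocalization_of_isOpenImmersion h2
  have hgen (x : T) : MemLocalization (⊥ : Ideal C) x := by
    simpa [Ideal.comap_bot_of_injective _ hinj] using hloc ⟨⊥, Ideal.isPrime_bot⟩ x
  rcases h3 with hV | hempty
  · have hdesc (x : T) (hx : MemLocalization p x) : x ∈ (algebraMap C T).range := by
      refine mem_range_of_forall_memLocalization hinj h1 (hgen x) fun q hq => ?_
      by_cases hqp : q.asIdeal = p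
      · exact hqp ▸ hx
      · obtain ⟨q', rfl⟩ := PrimeSpectrum.mem_range_comap_of_height_eq_one hht hV hq hqp
        exact hloc q' x
    obtain ⟨c, hcp, hc0⟩ := Submodule.exists_mem_ne_zero_of_ne_bot
      (PrimeSpectrum.asIdeal_ne_bot_of_height_ne_zero (hht ▸ one_ne_zero))
    have : IsDiscreteValuationRing (Localization.AtPrime p) := h1.1 ⟨p, hp⟩ hht
    exact absurd (invMemLocalization_of_ne_zero hinj p hgen hdesc (fun t => (h4 t).1) h5
      ((map_ne_zero_iff _ hinj).2 hc0)) (not_invMemLocalization_algebraMap hinj hcp)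
  · intro x
    refine mem_range_of_forall_memLocalization hinj h1 (hgen x) fun q _ => ?_
    obtain ⟨q', rfl⟩ := Set.compl_empty_iff.1 hempty ▸ Set.mem_univ q
    exact hloc q' x
end

section
/- Let C ⊆ T be Noetherian integral domains with T a unique factorization domain, with equal fraction fields K(C) = K(T) and equal unit groups C^× = T^×. Let t be a prime element of T lying in a height-one prime ideal p of C. Then t is an irreducible element of C. -/
theorem isLocalHom_of_injective_of_exists_isUnit {F M N : Type*} [Monoid M] [Monoid N]
    [FunLike F M N] [MonoidHomClass F M N] {f : F} (hf : Function.Injective f)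
    (h : ∀ y : N, IsUnit y → ∃ x : M, IsUnit x ∧ f x = y) : IsLocalHom f where
  map_nonunit a ha := by
    obtain ⟨x, hx, hfx⟩ := h (f a) ha
    rwa [← hf hfx]

theorem irreducible_of_prime_in_height_one_general
    (C T : Type*) [CommRing C]
    [CommRing T] [IsDomain T]
    [Algebra C T] (hinj : Function.Injective (algebraMap C T))
    -- `C^× = T^×`
    (hunits : ∀ x : T, IsUnit x ↔ ∃ c : C, IsUnit c ∧ algebraMap C T c = x)
    (t : C) (hprime : Prime (algebraMap C T t)) :
    Irreducible t := by
  have : IsLocalHom (algebraMap C T) :=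
    isLocalHom_of_injective_of_exists_isUnit hinj fun x => (hunits x).mp
  exact hprime.irreducible.of_map

/-- Let `C ⊆ T` be Noetherian integral domains with `T` a UFD, with equal fraction fields
`K(C) = K(T)` and equal unit groups `C^× = T^×`.  If `t` is a prime element of `T` lying in a
height-one prime ideal `p` of `C`, then `t` is an irreducible element of `C`. -/
theorem irreducible_of_prime_in_height_one
    (C T : Type*) [CommRing C] [IsDomain C] [IsNoetherianRing C]
    [CommRing T] [IsDomain T] [IsNoetherianRing T] [UniqueFactorizationMonoid T]
    [Algebra C T] (hinj : Function.Injective (algebraMap C T))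
    -- `K(C) = K(T)` : every element of `T` is a fraction of elements of `C`
    (hfrac : ∀ x : T, ∃ a b : C, b ≠ 0 ∧ x * algebraMap C T b = algebraMap C T a)
    -- `C^× = T^×`
    (hunits : ∀ x : T, IsUnit x ↔ ∃ c : C, IsUnit c ∧ algebraMap C T c = x)
    (p : Ideal C) [hp : p.IsPrime]
    (hht : Order.height (⟨p, hp⟩ : PrimeSpectrum C) = 1)
    (t : C) (htp : t ∈ p) (hprime : Prime (algebraMap C T t)) :
    Irreducible t :=
  irreducible_of_prime_in_height_one_general C T hinj hunits t hprime
end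

section
/- Let A ⊆ B be an extension of integral domains with B flat as an A-module, such that both A and B are unique factorization domains with the same fraction field K(A) = K(B). If the unit groups satisfy A^× = B^×, then B ∩ K(A) = A, i.e., A = B. -/
/-!
Write `x ∈ B` as a reduced fraction `a / b` of elements of `A`; since `B` is flat over `A`, the
scalar `gcd a b` can be cancelled in `B`, so `b • x = a • 1` with `a`, `b` relatively prime.
By the equational criterion for flatness this relation is trivial, and coprimality turns the
trivialising data into a single `y ∈ B` with `x = a • y` and `1 = b • y`. Hence `y` is a unit
of `B`, so it comes from `A`, and then so does `x = a • y`.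
-/

theorem exists_eq_mul_isRelPrime {α : Type*} [CommMonoidWithZero α] [IsGCDMonoid α] (a b : α) :
    ∃ g a' b', a = g * a' ∧ b = g * b' ∧ IsRelPrime a' b' := by
  obtain ⟨_⟩ := ‹IsGCDMonoid α›
  obtain ⟨a', b', ha, hb, hab⟩ := extract_gcd a b
  exact ⟨gcd a b, a', b', ha, hb, gcd_isUnit_iff_isRelPrime.mp hab⟩

namespace Module.Flat

theorem exists_eq_smul_of_smul_eq_smul {R M : Type*} [CommRing R] [IsDomain R]
    [DecompositionMonoid R] [AddCommGroup M] [Module R M] [Module.Flat R M] {a b : R}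
    (hab : IsRelPrime a b) (hb : b ≠ 0) {x m : M} (h : b • x = a • m) :
    ∃ y : M, x = a • y ∧ m = b • y := by
  have hrel : ∑ i, ![b, -a] i • ![x, m] i = 0 := by
    simp [h]
  obtain ⟨k, c, y, hxy, hc⟩ := isTrivialRelation_of_sum_smul_eq_zero hrel
  have hc' (j : Fin k) : b * c 0 j = a * c 1 j := by
    simpa [neg_mul, add_neg_eq_zero] using hc j
  choose u hu using fun j ↦ hab.symm.dvd_of_dvd_mul_left ⟨c 0 j, (hc' j).symm⟩
  have hc0 (j : Fin k) : c 0 j = a * u j := by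
    apply mul_left_cancel₀ hb
    rw [hc' j, hu j]
    ring
  refine ⟨∑ j, u j • y j, ?_, ?_⟩
  · simpa [Finset.smul_sum, smul_smul, hc0] using hxy 0
  · simpa [Finset.smul_sum, smul_smul, hu] using hxy 1

end Module.Flat

theorem eq_of_flat_ufd_extension_general
    (A B : Type*) [CommRing A] [IsDomain A] [CommRing B]
    [UniqueFactorizationMonoid A]
    [Algebra A B]
    (hflat : Module.Flat A B)
    -- `K(A) = K(B)` : every element of `B` is a fraction of elements of `A`
    (hfrac : ∀ x : B, ∃ a b : A, b ≠ 0 ∧ x * algebraMap A B b = algebraMap A B a)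
    -- `A^× = B^×`
    (hunits : ∀ x : B, IsUnit x ↔ ∃ a : A, IsUnit a ∧ algebraMap A B a = x) :
    Function.Surjective (algebraMap A B) := by
  intro x
  obtain ⟨a, b, hb, hx⟩ := hfrac x
  obtain ⟨g, a, b, rfl, rfl, hab⟩ := exists_eq_mul_isRelPrime a b
  have hx' : b • x = a • (1 : B) := by
    refine Module.Flat.isSMulRegular_of_nonZeroDivisors
      (mem_nonZeroDivisors_of_ne_zero (left_ne_zero_of_mul hb)) ?_
    simp only [Algebra.smul_def, map_mul, mul_one] at hx ⊢
    linear_combination hx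
  obtain ⟨y, rfl, hy⟩ :=
    Module.Flat.exists_eq_smul_of_smul_eq_smul hab (right_ne_zero_of_mul hb) hx'
  have hyu : IsUnit y := .of_mul_eq_one_right (algebraMap A B b) (by rw [hy, Algebra.smul_def])
  obtain ⟨c, -, rfl⟩ := (hunits y).mp hyu
  exact ⟨a * c, by simp [Algebra.smul_def]⟩

/-- Let `A ⊆ B` be an extension of UFDs with `B` flat over `A`, having the same fraction
field `K(A) = K(B)`.  If `A^× = B^×`, then `B ∩ K(A) = A`, i.e. `A = B`. -/
theorem eq_of_flat_ufd_extension
    (A B : Type*) [CommRing A] [IsDomain A] [CommRing B] [IsDomain B]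
    [UniqueFactorizationMonoid A] [UniqueFactorizationMonoid B]
    [Algebra A B] (hinj : Function.Injective (algebraMap A B))
    (hflat : Module.Flat A B)
    -- `K(A) = K(B)` : every element of `B` is a fraction of elements of `A`
    (hfrac : ∀ x : B, ∃ a b : A, b ≠ 0 ∧ x * algebraMap A B b = algebraMap A B a)
    -- `A^× = B^×`
    (hunits : ∀ x : B, IsUnit x ↔ ∃ a : A, IsUnit a ∧ algebraMap A B a = x) :
    Function.Surjective (algebraMap A B) :=
  eq_of_flat_ufd_extension_general A B hflat hfrac hunits
end

section
/- Let k be a field and let f_1, ..., f_n ∈ k[X_1, ..., X_n] be polynomials such that the Jacobian determinant det(∂f_i/∂X_j) is a nonzero constant (an element of k \ {0}). Then the polynomial ring T = k[X_1, ..., X_n] is unramified over the subring S = k[f_1, ..., f_n], and f_1, ..., f_n are algebraically independent over k. -/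
/-!
By the chain rule, every derivation `D` satisfies `D (f i) = ∑ j, ∂ f i / ∂ X j • D (X j)`, so
when the Jacobian matrix is invertible a derivation killing all `f i` kills all `X j`, hence
vanishes. For the universal derivation of `k[X]` over `k[f]` this says `Ω = 0`, which is formal
unramifiedness.

Dually, if `P (f) = 0` then `(∂ P / ∂ Y i) (f) = 0` for all `i`, so the kernel of `P ↦ P (f)` is
a prime ideal stable under all partial derivatives. Over a perfect field such an ideal is zero:
all partial derivatives of a nonzero element of minimal degree vanish, so it is a constant in
characteristic zero, and in characteristic `p` it is the `p`-th power of an element of smaller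
degree, which lies in the ideal because the ideal is prime. Over an arbitrary field, pass to the
algebraic closure.
-/

open MvPolynomial

theorem Derivation.map_aeval_eq_sum_pderiv {R A M σ : Type*} [CommSemiring R] [CommSemiring A]
    [Algebra R A] [AddCommMonoid M] [Module A M] [Module R M] [IsScalarTower R A M] [Fintype σ]
    (D : Derivation R A M) (g : σ → A) (P : MvPolynomial σ R) :
    D (aeval g P) = ∑ i, aeval g (pderiv i P) • D (g i) := by
  classical
  induction P using MvPolynomial.induction_on with
  | C a => simp
  | add p q hp hq => simp [hp, hq, add_smul, Finset.sum_add_distrib]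
  | mul_X p i hp =>
    simp [Derivation.leibniz, hp, pderiv_X, Finset.sum_add_distrib, add_smul, mul_smul,
      Finset.smul_sum, Pi.single_apply, apply_ite (aeval g), ite_smul]

theorem Matrix.eq_zero_of_forall_sum_smul_eq_zero {A M ι : Type*} [CommRing A] [AddCommMonoid M]
    [Module A M] [Fintype ι] [DecidableEq ι] (J : Matrix ι ι A) (hJ : IsUnit J.det) (v : ι → M)
    (h : ∀ i, ∑ j, J i j • v j = 0) : v = 0 := by
  funext l
  calc v l = ∑ j, (J⁻¹ * J) l j • v j := by simp [J.nonsing_inv_mul hJ, Matrix.one_apply]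
    _ = ∑ i, J⁻¹ l i • ∑ j, J i j • v j := by
      simp only [Matrix.mul_apply, Finset.sum_smul, Finset.smul_sum, mul_smul]
      exact Finset.sum_comm
    _ = 0 := by simp [h]

namespace MvPolynomial

variable {R σ : Type*}

noncomputable def jacobianMatrix [CommSemiring R] {ι : Type*} (f : ι → MvPolynomial σ R) :
    Matrix ι σ (MvPolynomial σ R) :=
  Matrix.of fun i j => pderiv j (f i)

theorem jacobianMatrix_map [CommSemiring R] {S ι : Type*} [CommSemiring S] (φ : R →+* S)
    (f : ι → MvPolynomial σ R) :
    jacobianMatrix (⇑(map φ) ∘ f) = (jacobianMatrix f).map (map φ) := by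
  ext i j
  simp [jacobianMatrix, pderiv_map]

theorem aeval_pderiv_eq_zero_of_aeval_eq_zero [CommRing R] [Fintype σ] [DecidableEq σ]
    {f : σ → MvPolynomial σ R} (hf : IsUnit (jacobianMatrix f).det) {P : MvPolynomial σ R}
    (hP : aeval f P = 0) (i : σ) : aeval f (pderiv i P) = 0 := by
  refine congrFun (Matrix.eq_zero_of_forall_sum_smul_eq_zero (jacobianMatrix f).transpose
    (by rwa [Matrix.det_transpose]) (fun i => aeval f (pderiv i P)) fun j => ?_) i
  have hchain := (pderiv j).map_aeval_eq_sum_pderiv f P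
  rw [hP, map_zero] at hchain
  simpa [jacobianMatrix, mul_comm] using hchain.symm

theorem formallyUnramified_adjoin_of_isUnit_det_jacobianMatrix [CommRing R] [Fintype σ]
    [DecidableEq σ] (f : σ → MvPolynomial σ R) (hf : IsUnit (jacobianMatrix f).det) :
    Algebra.FormallyUnramified (Algebra.adjoin R (Set.range f)) (MvPolynomial σ R) := by
  let S := Algebra.adjoin R (Set.range f)
  let D := (KaehlerDifferential.D S (MvPolynomial σ R)).restrictScalars R
  have hDX : ∀ j, D (X j) = 0 := congrFun <|
    Matrix.eq_zero_of_forall_sum_smul_eq_zero _ hf (fun j => D (X j)) fun i => by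
      have hDf : D (f i) = 0 :=
        (KaehlerDifferential.D S _).map_algebraMap ⟨f i, Algebra.subset_adjoin ⟨i, rfl⟩⟩
      simpa [hDf, jacobianMatrix] using (D.map_aeval_eq_sum_pderiv X (f i)).symm
  have hD : D = 0 := derivation_ext hDX
  constructor
  refine (Submodule.subsingleton_iff (MvPolynomial σ R)).1 (subsingleton_of_bot_eq_top ?_)
  rw [← KaehlerDifferential.span_range_derivation, eq_comm, Submodule.span_eq_bot]
  rintro _ ⟨P, rfl⟩
  exact congrArg (· P) hD

theorem totalDegree_pderiv_lt [CommSemiring R] {P : MvPolynomial σ R} {i : σ}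
    (h : pderiv i P ≠ 0) : (pderiv i P).totalDegree < P.totalDegree := by
  classical
  have hlt : ∀ m ∈ (pderiv i P).support, m.degree < P.totalDegree := by
    intro m hm
    have hm' : m + Finsupp.single i 1 ∈ P.support := by
      rw [mem_support_iff, coeff_pderiv] at hm
      exact mem_support_iff.2 (left_ne_zero_of_mul hm)
    have hle := le_totalDegree hm'
    change Finsupp.degree (m + _) ≤ _ at hle
    rw [map_add, Finsupp.degree_single] at hle
    omega
  obtain ⟨m, hm⟩ := support_nonempty.2 h
  exact (Finset.sup_lt_iff ((Nat.zero_le _).trans_lt (hlt m hm))).2 hlt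

theorem coeff_mul_eq_zero_of_pderiv_eq_zero [CommSemiring R] {P : MvPolynomial σ R} {i : σ}
    (h : pderiv i P = 0) (α : σ →₀ ℕ) : coeff α P * α i = 0 := by
  classical
  rcases Nat.eq_zero_or_pos (α i) with hα | hα
  · simp [hα]
  obtain ⟨m, rfl⟩ : ∃ m, α = m + Finsupp.single i 1 :=
    ⟨α - Finsupp.single i 1, (tsub_add_cancel_of_le (Finsupp.single_le_iff.2 hα)).symm⟩
  simpa [h] using (coeff_pderiv (i := i) P m).symm

theorem totalDegree_eq_zero_of_forall_pderiv_eq_zero [CommSemiring R] [NoZeroDivisors R]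
    [CharZero R] {P : MvPolynomial σ R} (h : ∀ i, pderiv i P = 0) : P.totalDegree = 0 :=
  (totalDegree_eq_zero_iff σ P).2 fun α hα i => by
    simpa [mem_support_iff.1 hα] using coeff_mul_eq_zero_of_pderiv_eq_zero (h i) α

theorem exists_expand_eq_of_forall_dvd [CommSemiring R] {p : ℕ} {P : MvPolynomial σ R}
    (h : ∀ α ∈ P.support, ∀ i, p ∣ α i) : ∃ Q, expand p Q = P := by
  refine ⟨∑ α ∈ P.support, monomial (α ⌊/⌋ p) (coeff α P), ?_⟩
  conv_rhs => rw [← support_sum_monomial_coeff P]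
  simp only [map_sum, expand_monomial]
  refine Finset.sum_congr rfl fun α hα => ?_
  rw [show p • (α ⌊/⌋ p) = α from Finsupp.ext fun j => by simp [Nat.mul_div_cancel' (h α hα j)]]

theorem exists_pow_eq_of_forall_pderiv_eq_zero [CommSemiring R] [NoZeroDivisors R] (p : ℕ)
    [Fact p.Prime] [CharP R p] [PerfectRing R p] {P : MvPolynomial σ R}
    (h : ∀ i, pderiv i P = 0) :
    ∃ Q : MvPolynomial σ R, Q ^ p = P ∧ Q.totalDegree * p = P.totalDegree := by
  obtain ⟨Q, rfl⟩ := exists_expand_eq_of_forall_dvd (p := p) fun α hα i =>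
    (CharP.cast_eq_zero_iff R p _).1 <|
      (mul_eq_zero.1 (coeff_mul_eq_zero_of_pderiv_eq_zero (h i) α)).resolve_left
        (mem_support_iff.1 hα)
  let frobInv := (frobeniusEquiv R p).symm.toRingHom
  have hdeg : (map frobInv Q).totalDegree = Q.totalDegree := by
    simp only [totalDegree, support_map_of_injective (f := frobInv) _ (frobeniusEquiv R p).symm.injective]
  refine ⟨map frobInv Q, ?_, by rw [hdeg, totalDegree_expand]⟩
  rw [← map_frobenius_expand, ← map_expand, map_map]
  convert map_id (expand p Q)
  ext
  simp [frobInv]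

theorem eq_bot_of_isPrime_of_forall_pderiv_mem [Field R] [PerfectField R]
    (I : Ideal (MvPolynomial σ R)) [hI : I.IsPrime] (hder : ∀ P ∈ I, ∀ i, pderiv i P ∈ I) :
    I = ⊥ := by
  have hconst : ∀ P ∈ I, P.totalDegree = 0 → P = 0 := by
    intro P hP h0
    rw [totalDegree_eq_zero_iff_eq_C] at h0
    rw [h0] at hP ⊢
    rw [C_eq_zero]
    by_contra hne
    exact hI.ne_top (I.eq_top_of_isUnit_mem hP ((isUnit_iff_ne_zero.2 hne).map C))
  refine (Submodule.eq_bot_iff I).2 fun P hP => ?_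
  induction hN : P.totalDegree using Nat.strong_induction_on generalizing P with
  | _ N ih =>
  have hpderiv : ∀ i, pderiv i P = 0 := fun i => by
    by_contra hne
    exact hne (ih _ (hN ▸ totalDegree_pderiv_lt hne) _ (hder P hP i) rfl)
  obtain ⟨p, hp⟩ := ExpChar.exists R
  cases hp with
  | zero => exact hconst P hP (totalDegree_eq_zero_of_forall_pderiv_eq_zero hpderiv)
  | prime hprime =>
    have := Fact.mk hprime
    obtain ⟨Q, rfl, hQ⟩ := exists_pow_eq_of_forall_pderiv_eq_zero p hpderiv
    rcases Nat.eq_zero_or_pos N with hN0 | hNpos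
    · exact hconst _ hP (hN.trans hN0)
    have hQN : Q.totalDegree < N := by
      have := hprime.one_lt
      nlinarith
    rw [ih _ hQN Q (hI.mem_of_pow_mem p hP) rfl, zero_pow hprime.ne_zero]

theorem algebraicIndependent_of_isUnit_det_jacobianMatrix [Field R] [Fintype σ] [DecidableEq σ]
    {f : σ → MvPolynomial σ R} (hf : IsUnit (jacobianMatrix f).det) :
    AlgebraicIndependent R f := by
  let φ := algebraMap R (AlgebraicClosure R)
  have hφf : IsUnit (jacobianMatrix (⇑(map φ) ∘ f)).det := by
    rw [jacobianMatrix_map, ← RingHom.mapMatrix_apply, ← RingHom.map_det]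
    exact hf.map _
  refine .of_ringHom_of_comp_eq (S := AlgebraicClosure R) φ (map φ) ?_ φ.injective
    (by ext; simp)
  rw [algebraicIndependent_iff_injective_aeval, RingHom.injective_iff_ker_eq_bot]
  have := RingHom.ker_isPrime (aeval (R := AlgebraicClosure R) (⇑(map φ) ∘ f))
  exact eq_bot_of_isPrime_of_forall_pderiv_mem _ fun P hP i =>
    aeval_pderiv_eq_zero_of_aeval_eq_zero hφf hP i

end MvPolynomial

/-- Let `k` be a field and `f 1, ..., f n` polynomials in `k[X_1, ..., X_n]` whose Jacobian
determinant is a nonzero constant.  Then `T = k[X_1, ..., X_n]` is unramified over the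
subring `S = k[f_1, ..., f_n]`, and `f 1, ..., f n` are algebraically independent over
`k`. -/
theorem unramified_of_jacobian_isUnit
    (n : ℕ) (k : Type*) [Field k]
    (f : Fin n → MvPolynomial (Fin n) k) (c : k) (hc : c ≠ 0)
    (hdet : (Matrix.of fun i j => pderiv j (f i)).det = C c) :
    (Algebra.FiniteType (Algebra.adjoin k (Set.range f)) (MvPolynomial (Fin n) k) ∧
      Algebra.FormallyUnramified (Algebra.adjoin k (Set.range f)) (MvPolynomial (Fin n) k)) ∧
    AlgebraicIndependent k f := by
  have hf : IsUnit (jacobianMatrix f).det := hdet ▸ (isUnit_iff_ne_zero.2 hc).map C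
  exact ⟨⟨.of_restrictScalars_finiteType k _ _,
    formallyUnramified_adjoin_of_isUnit_det_jacobianMatrix f hf⟩,
    algebraicIndependent_of_isUnit_det_jacobianMatrix hf⟩
end

section
/- Let k be a field of characteristic zero with algebraic closure k', and let f_1, ..., f_n ∈ k[X_1, ..., X_n]. If k'[f_1, ..., f_n] = k'[X_1, ..., X_n] (equality of subrings of k'[X_1, ..., X_n]), then k[f_1, ..., f_n] = k[X_1, ..., X_n]. -/
open MvPolynomial

/-- Let `k` be a field of characteristic zero with algebraic closure `k'`, and let
`f 1, ..., f n ∈ k[X_1, ..., X_n]`.  If `k'[f_1, ..., f_n] = k'[X_1, ..., X_n]`, then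
`k[f_1, ..., f_n] = k[X_1, ..., X_n]`. -/
theorem adjoin_eq_top_of_adjoin_eq_top_closure
    (n : ℕ) (k : Type*) [Field k] [CharZero k]
    (f : Fin n → MvPolynomial (Fin n) k)
    (h : Algebra.adjoin (AlgebraicClosure k)
        (Set.range fun i =>
          MvPolynomial.map (algebraMap k (AlgebraicClosure k)) (f i)) = ⊤) :
    Algebra.adjoin k (Set.range f) = ⊤ := by
  classical
  set k' := AlgebraicClosure k
  set φ : MvPolynomial (Fin n) k →+* MvPolynomial (Fin n) k' :=
    (MvPolynomial.map (algebraMap k k')) with hφ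
  -- a k-linear retraction of k' onto k
  obtain ⟨r, hr⟩ := (Algebra.linearMap k k').exists_leftInverse_of_injective
    (LinearMap.ker_eq_bot.2 (algebraMap k k').injective)
  have hr' : ∀ a : k, r (algebraMap k k' a) = a := fun a => LinearMap.congr_fun hr a
  -- apply r coefficientwise
  set R : MvPolynomial (Fin n) k' → MvPolynomial (Fin n) k :=
    fun p => ∑ m ∈ p.support, monomial m (r (coeff m p)) with hR
  have Rcoeff : ∀ p m, coeff m (R p) = r (coeff m p) := by
    intro p m
    rw [hR]
    simp only [coeff_sum, coeff_monomial, Finset.sum_ite_eq' p.support m]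
    split_ifs with hm
    · rfl
    · rw [notMem_support_iff.1 hm, map_zero]
  set S := Algebra.adjoin k (Set.range f) with hS
  -- key: R (c • φ w) = r c • w
  have Rsmul : ∀ (c : k') (w : MvPolynomial (Fin n) k), R (c • φ w) = r c • w := by
    intro c w
    apply MvPolynomial.ext
    intro m
    rw [Rcoeff]
    rw [MvPolynomial.coeff_smul, MvPolynomial.coeff_smul, hφ, MvPolynomial.coeff_map]
    rw [smul_eq_mul, mul_comm, ← Algebra.smul_def, map_smul, smul_eq_mul, smul_eq_mul,
      mul_comm]
  have hmem : ∀ i : Fin n, (X i : MvPolynomial (Fin n) k) ∈ S := by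
    intro i
    have hx : φ (X i) ∈ Submodule.span k'
        (↑(Submonoid.closure (Set.range fun i => φ (f i))) :
          Set (MvPolynomial (Fin n) k')) := by
      rw [← Algebra.adjoin_eq_span, h]
      exact trivial
    have key : ∀ (z : MvPolynomial (Fin n) k')
        (_ : z ∈ Submodule.span k'
          (↑(Submonoid.closure (Set.range fun i => φ (f i))) :
            Set (MvPolynomial (Fin n) k'))),
        ∀ c : k', R (c • z) ∈ S := by
      intro z hz
      induction hz using Submodule.span_induction with
      | mem x hx =>
        intro c
        have : x ∈ Submonoid.map (φ : MvPolynomial (Fin n) k →* MvPolynomial (Fin n) k')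
            (Submonoid.closure (Set.range f)) := by
          rw [MonoidHom.map_mclosure]
          have hset : (⇑(φ : MvPolynomial (Fin n) k →* MvPolynomial (Fin n) k') ''
              Set.range f) = Set.range fun i => φ (f i) := by
            rw [← Set.range_comp]; rfl
          rwa [hset]
        obtain ⟨w, hw, hwx⟩ := this
        have hwS : w ∈ S := by
          have : Submonoid.closure (Set.range f) ≤ S.toSubmonoid :=
            Submonoid.closure_le.2 Algebra.subset_adjoin
          exact this hw
        rw [← hwx]
        show R (c • φ w) ∈ S
        rw [Rsmul]
        exact S.smul_mem hwS _
      | zero =>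
        intro c
        rw [smul_zero]
        have : R 0 = 0 := by
          apply MvPolynomial.ext
          intro m
          rw [Rcoeff, coeff_zero, map_zero, coeff_zero]
        rw [this]
        exact S.zero_mem
      | add x y hx hy ihx ihy =>
        intro c
        rw [smul_add]
        have : R (c • x + c • y) = R (c • x) + R (c • y) := by
          apply MvPolynomial.ext
          intro m
          simp only [Rcoeff, coeff_add, map_add]
        rw [this]
        exact S.add_mem (ihx c) (ihy c)
      | smul a x hx ihx =>
        intro c
        rw [smul_smul]
        exact ihx (c * a)
    have := key _ hx 1
    rw [one_smul] at this
    have hRφ : R (φ (X i)) = X i := by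
      apply MvPolynomial.ext
      intro m
      rw [Rcoeff, hφ, MvPolynomial.coeff_map, hr']
    rwa [hRφ] at this
  rw [eq_top_iff, ← MvPolynomial.adjoin_range_X]
  exact Algebra.adjoin_le (Set.range_subset_iff.2 hmem)
end
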